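/- Let (X, d) be a cone metric space over a Banach space E with normal cone P of normal constant k. A sequence (xₙ) in X is a Cauchy sequence if and only if ‖d(xₙ, xₘ)‖ → 0 as n, m → ∞. -/

import Mathlib

open Filter Topology

/-- A cone in a real normed space: closed, nonempty, not `{0}`, closed under
nonnegative linear combinations, and pointed. -/
def IsCone {E : Type*} [NormedAddCommGroup E] [NormedSpace ℝ E] (P : Set E) : Prop :=
  IsClosed P ∧ P.Nonempty ∧ P ≠ {0} ∧
  (∀ a b : ℝ, 0 ≤ a → 0 ≤ b → ∀ x ∈ P, ∀ y ∈ P, a • x + b • y ∈ P) ∧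
  (∀ x ∈ P, -x ∈ P → x = 0)

/-- The partial ordering induced by a cone: `x ≤ y` iff `y - x ∈ P`. -/
def coneLE {E : Type*} [NormedAddCommGroup E] [NormedSpace ℝ E] (P : Set E) (x y : E) : Prop :=
  y - x ∈ P

/-- `P` is a normal cone with normal constant `k`: `0 ≤ x ≤ y` implies `‖x‖ ≤ k‖y‖`. -/
def IsNormalCone {E : Type*} [NormedAddCommGroup E] [NormedSpace ℝ E] (P : Set E) (k : ℝ) : Prop :=
  ∀ x y : E, x ∈ P → y - x ∈ P → ‖x‖ ≤ k * ‖y‖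

/-- `d` is a cone metric on `X` with values in `(E, P)`. -/
structure IsConeMetric {E : Type*} [NormedAddCommGroup E] [NormedSpace ℝ E]
    (P : Set E) {X : Type*} (d : X → X → E) : Prop where
  mem_cone : ∀ x y, d x y ∈ P
  eq_zero_iff : ∀ x y, d x y = 0 ↔ x = y
  symm : ∀ x y, d x y = d y x
  triangle : ∀ x y z, d x z + d z y - d x y ∈ P

/-- Convergence of a sequence in a cone metric space. -/
def ConeConv {E : Type*} [NormedAddCommGroup E] [NormedSpace ℝ E]
    (P : Set E) {X : Type*} (d : X → X → E) (s : ℕ → X) (x : X) : Prop :=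
  ∀ c ∈ interior P, ∃ N, ∀ n > N, c - d (s n) x ∈ interior P

/-- Cauchy sequences in a cone metric space. -/
def ConeCauchy {E : Type*} [NormedAddCommGroup E] [NormedSpace ℝ E]
    (P : Set E) {X : Type*} (d : X → X → E) (s : ℕ → X) : Prop :=
  ∀ c ∈ interior P, ∃ N, ∀ n > N, ∀ m > N, c - d (s n) (s m) ∈ interior P

/-- A cone metric space is complete if every Cauchy sequence converges. -/
def ConeComplete {E : Type*} [NormedAddCommGroup E] [NormedSpace ℝ E]
    (P : Set E) {X : Type*} (d : X → X → E) : Prop :=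
  ∀ s : ℕ → X, ConeCauchy P d s → ∃ x, ConeConv P d s x

/-! Normality turns `d(xₙ, xₘ) ≤ t • c` for an interior point `c` into `‖d(xₙ, xₘ)‖ ≤ k t ‖c‖`,
and `t • c` stays interior for every `t > 0`; conversely, `c - d(xₙ, xₘ) → c`, and the interior
of `P` is a neighbourhood of `c`. -/

lemma eventually_sub_mem_interior_of_tendsto_zero {E ι : Type*} [TopologicalSpace E] [AddGroup E]
    [ContinuousSub E] {P : Set E} {l : Filter ι} {u : ι → E} (hu : Tendsto u l (𝓝 0)) {c : E}
    (hc : c ∈ interior P) : ∀ᶠ i in l, c - u i ∈ interior P := by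
  have hcu : Tendsto (fun i => c - u i) l (𝓝 c) := by simpa using tendsto_const_nhds.sub hu
  exact hcu.eventually (isOpen_interior.mem_nhds hc)

section ConeOrder

variable {E : Type*} [NormedAddCommGroup E] [NormedSpace ℝ E] {P : Set E}

lemma IsCone.smul_mem_interior (hP : IsCone P) {c : E} (hc : c ∈ interior P) {t : ℝ}
    (ht : 0 < t) : t • c ∈ interior P := by
  have hsub : (t • ·) '' interior P ⊆ P := by
    rintro _ ⟨x, hx, rfl⟩
    simpa using hP.2.2.2.1 t 0 ht.le le_rfl x (interior_subset hx) x (interior_subset hx)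
  exact interior_maximal hsub (isOpenMap_smul₀ ht.ne' _ isOpen_interior) ⟨c, hc, rfl⟩

lemma exists_pos_mul_norm_smul_lt (k : ℝ) (c : E) {ε : ℝ} (hε : 0 < ε) :
    ∃ t : ℝ, 0 < t ∧ k * ‖t • c‖ < ε := by
  have h : Tendsto (fun t : ℝ => k * ‖t • c‖) (𝓝 0) (𝓝 0) := by
    have hcont : Continuous fun t : ℝ => k * ‖t • c‖ :=
      (continuous_id.smul continuous_const).norm.const_mul k
    simpa using hcont.tendsto 0
  exact (h.eventually (gt_mem_nhds hε)).exists_gt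

variable {ι : Type*} {l : Filter ι} {u : ι → E}

lemma IsNormalCone.tendsto_zero_of_forall_eventually_sub_mem_interior {k : ℝ}
    (hnorm : IsNormalCone P k) (hP : IsCone P) (hint : (interior P).Nonempty)
    (hu : ∀ i, u i ∈ P) (h : ∀ c ∈ interior P, ∀ᶠ i in l, c - u i ∈ interior P) :
    Tendsto u l (𝓝 0) := by
  obtain ⟨c, hc⟩ := hint
  refine NormedAddGroup.tendsto_nhds_zero.2 fun ε hε => ?_
  obtain ⟨t, ht, htε⟩ := exists_pos_mul_norm_smul_lt k c hε
  filter_upwards [h _ (hP.smul_mem_interior hc ht)] with i hi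
  exact (hnorm _ _ (hu i) (interior_subset hi)).trans_lt htε

end ConeOrder

lemma coneCauchy_iff_forall_eventually {E : Type*} [NormedAddCommGroup E] [NormedSpace ℝ E]
    {P : Set E} {X : Type*} {d : X → X → E} {s : ℕ → X} :
    ConeCauchy P d s ↔
      ∀ c ∈ interior P, ∀ᶠ p : ℕ × ℕ in atTop, c - d (s p.1) (s p.2) ∈ interior P := by
  refine forall₂_congr fun c _ => ?_
  rw [eventually_atTop_prod_self]
  constructor
  · rintro ⟨N, hN⟩
    exact ⟨N + 1, fun n m hn hm => hN n hn m hm⟩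
  · rintro ⟨N, hN⟩
    exact ⟨N, fun n hn m hm => hN n m hn.le hm.le⟩

theorem coneCauchy_iff_norm_tendsto_zero_general {E : Type*} [NormedAddCommGroup E] [NormedSpace ℝ E]
    {X : Type*} (P : Set E) (hP : IsCone P)
    (hint : (interior P).Nonempty) (k : ℝ) (hnorm : IsNormalCone P k)
    (d : X → X → E) (hd : IsConeMetric P d) (s : ℕ → X) :
    ConeCauchy P d s ↔
      Tendsto (fun p : ℕ × ℕ => ‖d (s p.1) (s p.2)‖) atTop (𝓝 0) := by
  rw [← tendsto_zero_iff_norm_tendsto_zero, coneCauchy_iff_forall_eventually]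
  exact ⟨hnorm.tendsto_zero_of_forall_eventually_sub_mem_interior hP hint fun _ => hd.mem_cone _ _,
    fun h _ => eventually_sub_mem_interior_of_tendsto_zero h⟩

theorem coneCauchy_iff_norm_tendsto_zero {E : Type*} [NormedAddCommGroup E] [NormedSpace ℝ E]
    [CompleteSpace E] {X : Type*} (P : Set E) (hP : IsCone P)
    (hint : (interior P).Nonempty) (k : ℝ) (hk : 0 < k) (hnorm : IsNormalCone P k)
    (d : X → X → E) (hd : IsConeMetric P d) (s : ℕ → X) :
    ConeCauchy P d s ↔
      Tendsto (fun p : ℕ × ℕ => ‖d (s p.1) (s p.2)‖) atTop (𝓝 0) :=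
  coneCauchy_iff_norm_tendsto_zero_general P hP hint k hnorm d hd s
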